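/- Let Σ be a finite alphabet and let B be the quiver with three vertices ⊥, ∗, ⊤ and with edges: one edge bow : ⊥ ⟶ ∗, one edge e_a : ∗ ⟶ ∗ for each letter a ∈ Σ, and one edge eow : ∗ ⟶ ⊤. For a word w = a₁⋯aₙ ∈ List Σ, let ⌊w⌉ : ⊥ ⟶ ⊤ denote the morphism of Paths B given by the path bow, e_{a₁}, …, e_{aₙ}, eow. Then a language L ⊆ List Σ is regular in the classical sense (Language.IsRegular, i.e., accepted by a DFA with finitely many states) if and only if there exist a category Q, a finitary ULF functor p : Q ⥤ Paths B, and objects q₀, q_f of Q with p.obj q₀ = ⊥ and p.obj q_f = ⊤, such that the set of morphisms p.map α for α : q₀ ⟶ q_f equals { ⌊w⌉ | w ∈ L }. -/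

import Mathlib

/-!
A DFA `M` yields the quiver with vertices `⊥`, the states of `M` and `⊤`, and with edges
`⊥ ⟶ M.start`, `s ⟶ M.step s a` for each letter `a`, and `s ⟶ ⊤` for each accepting `s`.
Labelling edges gives a prefunctor to `BV σ`, and any prefunctor induces a ULF functor of path
categories: a factorization of the image of a path is a cut at some position, which lifts
uniquely to a cut of the path. Paths `⊥ ⟶ ⊤` are exactly the runs of `M` on accepted words.

Conversely, a finitary ULF functor `p` is read as an NFA whose (finitely many) states are the
objects over `∗` and whose transitions are the arrows over single letters. Unique lifting of
factorizations cuts an arrow `q₀ ⟶ q_f` over `⌊w⌉` into arrows over `bow`, the letters of `w`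
and `eow`, i.e. into an accepting run of that NFA on `w`; the subset construction finishes.
-/

open CategoryTheory

universe v u v' u'

/-- A functor `p : D ⥤ C` has the unique lifting of factorizations property (is ULF) if
every factorization of the image of a morphism lifts uniquely. -/
def IsULF {D : Type u} {C : Type u'} [Category.{v} D] [Category.{v'} C] (p : D ⥤ C) : Prop :=
  ∀ ⦃X Y : D⦄ (α : X ⟶ Y) ⦃B : C⦄ (u : p.obj X ⟶ B) (v : B ⟶ p.obj Y),
    p.map α = u ≫ v →
    ∃! t : Σ (Z : D), (X ⟶ Z) × (Z ⟶ Y),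
      ∃ e : p.obj t.1 = B,
        t.2.1 ≫ t.2.2 = α ∧ p.map t.2.1 ≫ eqToHom e = u ∧ p.map t.2.2 = eqToHom e ≫ v

/-- A functor `p : D ⥤ C` is finitary if its fibers over objects and over morphisms
are all finite. -/
def IsFinitary {D : Type u} {C : Type u'} [Category.{v} D] [Category.{v'} C]
    (p : D ⥤ C) : Prop :=
  (∀ A : C, { X : D | p.obj X = A }.Finite) ∧
    ∀ (A B : C) (w : A ⟶ B),
      { t : Σ (X : D) (Y : D), X ⟶ Y |
        ∃ (hX : p.obj t.1 = A) (hY : p.obj t.2.1 = B),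
          p.map t.2.2 = eqToHom hX ≫ w ≫ eqToHom hY.symm }.Finite

/-- The vertices of the bracketing quiver: `⊥`, `∗` and `⊤`. -/
inductive BV (σ : Type) : Type where
  | bot | star | top

/-- The edges of the bracketing quiver: one edge `bow : ⊥ ⟶ ∗`, an edge `∗ ⟶ ∗` for each
letter of `σ`, and one edge `eow : ∗ ⟶ ⊤`. -/
inductive BE (σ : Type) : BV σ → BV σ → Type where
  | bow : BE σ .bot .star
  | letter : σ → BE σ .star .star
  | eow : BE σ .star .top

instance (σ : Type) : Quiver (BV σ) := ⟨BE σ⟩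

/-- The path `e_{a₁}, …, e_{aₙ} : ∗ ⟶ ∗` spelling out a word `a₁⋯aₙ`. -/
def wordPath {σ : Type} : List σ → Quiver.Path (BV.star : BV σ) BV.star
  | [] => Quiver.Path.nil
  | a :: w => (Quiver.Path.cons Quiver.Path.nil (BE.letter a)).comp (wordPath w)

/-- The morphism `⌊w⌉ : ⊥ ⟶ ⊤` of `Paths (BV σ)` given by the path
`bow, e_{a₁}, …, e_{aₙ}, eow` for a word `w = a₁⋯aₙ`. -/
def bracket {σ : Type} (w : List σ) :
    ((Paths.of (BV σ)).obj (BV.bot : BV σ)) ⟶ ((Paths.of (BV σ)).obj BV.top) :=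
  Quiver.Path.cons ((Quiver.Path.cons Quiver.Path.nil BE.bow).comp (wordPath w)) BE.eow

open Quiver

namespace Quiver.Path

variable {V : Type*} [Quiver V]

theorem sigma_eq_of_comp_eq_comp {X Y Z₁ Z₂ : V} (β₁ : Path X Z₁) (γ₁ : Path Z₁ Y)
    (β₂ : Path X Z₂) (γ₂ : Path Z₂ Y) (h : β₁.comp γ₁ = β₂.comp γ₂)
    (hl : γ₁.length = γ₂.length) :
    (⟨Z₁, β₁, γ₁⟩ : Σ Z, Path X Z × Path Z Y) = ⟨Z₂, β₂, γ₂⟩ := by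
  induction γ₁ generalizing Z₂ with
  | nil =>
    cases γ₂ with
    | nil => rw [show β₁ = β₂ from h]
    | cons => simp at hl
  | cons γ₁ e₁ ih =>
    cases γ₂ with
    | nil => simp at hl
    | cons γ₂ e₂ =>
      obtain ⟨rfl, hcomp, he⟩ := Path.cons.inj h
      cases ih β₂ γ₂ (eq_of_heq hcomp) (by simpa using hl)
      cases he
      rfl

def edgeList {a : V} : ∀ {b : V}, Path a b → List (Σ x y : V, x ⟶ y)
  | _, .nil => []
  | _, .cons p e => ⟨_, _, e⟩ :: edgeList p

theorem length_edgeList {a b : V} (p : Path a b) : (edgeList p).length = p.length := by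
  induction p with
  | nil => rfl
  | cons p e ih => simp [edgeList, ih]

theorem edgeList_injective (a : V) :
    Function.Injective (fun t : Σ b, Path a b => edgeList t.2) := by
  rintro ⟨b, p⟩ ⟨c, q⟩ h
  induction p generalizing c with
  | nil => cases q with
    | nil => rfl
    | cons => simp [edgeList] at h
  | cons p e ih =>
    cases q with
    | nil => simp [edgeList] at h
    | cons q f =>
      obtain ⟨hhead, htail⟩ := List.cons.inj h
      cases ih _ q htail
      cases hhead
      rfl

theorem finite_setOf_length_eq [Finite V] [Finite (Σ x y : V, x ⟶ y)] (n : ℕ) :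
    {t : Σ a b : V, Path a b | t.2.2.length = n}.Finite := by
  have hinj : Function.Injective (fun t : Σ a b : V, Path a b => (t.1, edgeList t.2.2)) := by
    rintro ⟨a, b, p⟩ ⟨a', b', q⟩ h
    obtain ⟨rfl, h⟩ := Prod.mk.inj h
    cases edgeList_injective a (a₁ := ⟨b, p⟩) (a₂ := ⟨b', q⟩) h
    rfl
  refine ((Set.finite_univ.prod (List.finite_length_eq _ n)).preimage hinj.injOn).subset ?_
  rintro ⟨a, b, p⟩ rfl
  exact ⟨trivial, length_edgeList p⟩

end Quiver.Path

theorem Prefunctor.length_mapPath {V W : Type*} [Quiver V] [Quiver W] (F : V ⥤q W) {a b : V}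
    (p : Path a b) : (F.mapPath p).length = p.length := by
  induction p with
  | nil => rfl
  | cons p e ih => simp [ih]

section ULF

variable {D : Type u} {C : Type u'} [Category.{v} D] [Category.{v'} C]

theorem CategoryTheory.Functor.isHomLift_iff_map_eq (p : D ⥤ C) {X Y : D} {A B : C}
    (hX : p.obj X = A) (hY : p.obj Y = B) (m : A ⟶ B) (α : X ⟶ Y) :
    p.IsHomLift m α ↔ p.map α = eqToHom hX ≫ m ≫ eqToHom hY.symm :=
  ⟨fun _ => IsHomLift.fac' p m α, IsHomLift.of_fac' p m α hX hY⟩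

theorem Sigma.mk_eq_of_eqToHom {X Y A B : C} (e : A = B) {f : X ⟶ A} {f' : X ⟶ B}
    {g : A ⟶ Y} {g' : B ⟶ Y} (hf : f ≫ eqToHom e = f') (hg : g = eqToHom e ≫ g') :
    (⟨A, f, g⟩ : Σ Z, (X ⟶ Z) × (Z ⟶ Y)) = ⟨B, f', g'⟩ := by
  subst e hf hg
  simp

theorem IsULF.exists_isHomLift_factor {p : D ⥤ C} (hp : IsULF p) {X Y : D} (α : X ⟶ Y)
    {A B E : C} (u : A ⟶ B) (v : B ⟶ E) [p.IsHomLift (u ≫ v) α] :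
    ∃ (Z : D) (β : X ⟶ Z) (γ : Z ⟶ Y), β ≫ γ = α ∧ p.IsHomLift u β ∧ p.IsHomLift v γ := by
  have hX := IsHomLift.domain_eq p (u ≫ v) α
  have hY := IsHomLift.codomain_eq p (u ≫ v) α
  have hα : p.map α = (eqToHom hX ≫ u) ≫ v ≫ eqToHom hY.symm := by
    simpa using IsHomLift.fac' p (u ≫ v) α
  obtain ⟨⟨Z, β, γ⟩, ⟨e, hβγ, hβ, hγ⟩, -⟩ := hp α _ _ hα
  refine ⟨Z, β, γ, hβγ, IsHomLift.of_fac' p u β hX e ?_, IsHomLift.of_fac' p v γ e hY hγ⟩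
  rw [← Category.assoc, ← hβ]
  simp

end ULF

section FreeMap

variable {V : Type u} {W : Type u'} [Quiver.{v} V] [Quiver.{v'} W] (F : V ⥤q W)

theorem isULF_freeMap : IsULF (Cat.freeMap F) := by
  rintro (X : V) (Y : V) (α : Path X Y) (B : W) (u : Path (F.obj X) B) (v : Path B (F.obj Y))
    (hα : F.mapPath α = u.comp v)
  have hlen : α.length = u.length + v.length := by
    rw [← F.length_mapPath α, hα, Path.length_comp]
  obtain ⟨Z, β, γ, rfl, hβ⟩ := α.exists_eq_comp_of_le_length (n := u.length) (by omega)
  rw [F.mapPath_comp] at hα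
  have hγ : γ.length = v.length := by rw [Path.length_comp] at hlen; omega
  cases Path.sigma_eq_of_comp_eq_comp _ _ u v hα (by rw [F.length_mapPath, hγ])
  refine ⟨⟨Z, β, γ⟩, ⟨rfl, rfl, Category.comp_id _, (Category.id_comp _).symm⟩, ?_⟩
  rintro ⟨Z', β', γ'⟩ ⟨e, hβγ, hβ', hγ'⟩
  have hs := congrArg (fun s : Σ B : W, Path (F.obj X) B × Path B (F.obj Y) => s.2.2.length)
    (Sigma.mk_eq_of_eqToHom e hβ' hγ')
  refine Path.sigma_eq_of_comp_eq_comp β' γ' β γ hβγ ?_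
  simp only [F.length_mapPath] at hs
  exact (F.length_mapPath γ').symm.trans hs

theorem isFinitary_freeMap [Finite V] [Finite (Σ x y : V, x ⟶ y)] :
    IsFinitary (Cat.freeMap F) := by
  refine ⟨fun A => (Set.finite_univ (α := V)).subset fun _ _ => trivial, fun A B w => ?_⟩
  refine (Path.finite_setOf_length_eq (V := V) w.length).subset ?_
  rintro ⟨(X : V), (Y : V), (α : Path X Y)⟩ ⟨rfl, rfl, hα⟩
  have := congrArg Path.length hα
  simp only [eqToHom_refl, Category.id_comp, Category.comp_id] at this
  exact (F.length_mapPath α).symm.trans this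

end FreeMap

section ULift

universe w₁ w₂

attribute [local instance] uliftCategory

variable {D : Type u} [Category.{v} D] {C : Type u'} [Category.{v'} C] {p : D ⥤ C}

theorem IsULF.uliftDown_comp (hp : IsULF p) :
    IsULF ((ULiftHom.down : ULiftHom.{w₂} (ULift.{w₁} D) ⥤ _) ⋙ ULift.downFunctor ⋙ p) := by
  intro X Y α B u v huv
  let e : (Σ Z : ULiftHom.{w₂} (ULift.{w₁} D), (X ⟶ Z) × (Z ⟶ Y)) ≃
      (Σ Z : D, (X.objDown.down ⟶ Z) × (Z ⟶ Y.objDown.down)) :=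
    { toFun := fun t => ⟨t.1.objDown.down, t.2.1.down, t.2.2.down⟩
      invFun := fun t => ⟨ULiftHom.objUp (ULift.up t.1), ULift.up t.2.1, ULift.up t.2.2⟩
      left_inv := fun _ => rfl
      right_inv := fun _ => rfl }
  refine (e.existsUnique_congr fun _ => ?_).mpr (hp α.down u v huv)
  exact ⟨fun ⟨h, hc, hu, hv⟩ => ⟨h, congrArg ULift.down hc, hu, hv⟩,
    fun ⟨h, hc, hu, hv⟩ => ⟨h, ULift.down_injective hc, hu, hv⟩⟩

theorem IsFinitary.uliftDown_comp (hp : IsFinitary p) :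
    IsFinitary ((ULiftHom.down : ULiftHom.{w₂} (ULift.{w₁} D) ⥤ _) ⋙ ULift.downFunctor ⋙ p) := by
  have hobj : Function.Injective fun X : ULiftHom.{w₂} (ULift.{w₁} D) => X.objDown.down :=
    fun _ _ h => congrArg (fun x => ULiftHom.objUp (ULift.up x)) h
  have hhom : Function.Injective fun t : Σ X Y : ULiftHom.{w₂} (ULift.{w₁} D), X ⟶ Y =>
      (⟨t.1.objDown.down, t.2.1.objDown.down, t.2.2.down⟩ : Σ X Y : D, X ⟶ Y) :=
    Function.LeftInverse.injective (g := fun t => ⟨ULiftHom.objUp (ULift.up t.1),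
      ULiftHom.objUp (ULift.up t.2.1), ULift.up t.2.2⟩) fun _ => rfl
  exact ⟨fun A => (hp.1 A).preimage hobj.injOn, fun A B w => (hp.2 A B w).preimage hhom.injOn⟩

end ULift

section Bracket

variable {σ : Type}

def bowHom : (Paths.of (BV σ)).obj BV.bot ⟶ (Paths.of (BV σ)).obj BV.star :=
  Path.nil.cons BE.bow

def letterHom (a : σ) : (Paths.of (BV σ)).obj BV.star ⟶ (Paths.of (BV σ)).obj BV.star :=
  Path.nil.cons (BE.letter a)

def eowHom : (Paths.of (BV σ)).obj BV.star ⟶ (Paths.of (BV σ)).obj BV.top :=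
  Path.nil.cons BE.eow

def wordHom (w : List σ) : (Paths.of (BV σ)).obj BV.star ⟶ (Paths.of (BV σ)).obj BV.star :=
  wordPath w

theorem wordHom_nil : wordHom ([] : List σ) = 𝟙 _ := rfl

theorem wordHom_cons (a : σ) (w : List σ) : wordHom (a :: w) = letterHom a ≫ wordHom w := rfl

theorem bracket_eq (w : List σ) : bracket w = bowHom ≫ wordHom w ≫ eowHom := rfl

theorem wordPath_concat (w : List σ) (a : σ) :
    wordPath (w ++ [a]) = (wordPath w).cons (BE.letter a) := by
  induction w with
  | nil => rfl
  | cons b w ih =>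
    change (Path.nil.cons (BE.letter b)).comp (wordPath (w ++ [a])) = _
    rw [ih]
    rfl

theorem wordPath_injective : Function.Injective (wordPath (σ := σ)) := by
  intro w₁ w₂ h
  induction w₁ generalizing w₂ with
  | nil => cases w₂ with
    | nil => rfl
    | cons => exact absurd (congrArg Path.length h) (by simp [wordPath]; omega)
  | cons a w₁ ih => cases w₂ with
    | nil => exact absurd (congrArg Path.length h) (by simp [wordPath])
    | cons b w₂ =>
      have h : (Path.nil.cons (BE.letter a)).comp (wordPath w₁) =
          (Path.nil.cons (BE.letter b)).comp (wordPath w₂) := h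
      obtain ⟨hab, hw⟩ := (Path.comp_inj' (by rfl)).1 h
      cases (Path.cons.inj hab).2.2.eq
      rw [ih hw]

theorem bracket_injective : Function.Injective (bracket (σ := σ)) :=
  fun _ _ h => wordPath_injective (Path.comp_injective_right _ (Path.cons.inj h).2.1.eq)

end Bracket

theorem NFA.isRegular_accepts {α σ : Type*} [Finite σ] (M : NFA α σ) : M.accepts.IsRegular :=
  Language.isRegular_iff.mpr ⟨Set σ, Fintype.ofFinite _, M.toDFA, M.toDFA_correct⟩

section Recognizer

variable {σ : Type} {Q : Type u} [Category.{v} Q] (p : Q ⥤ Paths (BV σ)) (q₀ qf : Q)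

def CategoryTheory.Functor.toNFA :
    NFA σ {X : Q // p.obj X = (Paths.of (BV σ)).obj BV.star} where
  step s a := {t | ∃ β : s.1 ⟶ t.1, p.IsHomLift (letterHom a) β}
  start := {t | ∃ β : q₀ ⟶ t.1, p.IsHomLift bowHom β}
  accept := {s | ∃ γ : s.1 ⟶ qf, p.IsHomLift eowHom γ}

theorem CategoryTheory.Functor.exists_isHomLift_of_path {s t} {w : List σ}
    (π : (p.toNFA q₀ qf).Path s t w) : ∃ β : s.1 ⟶ t.1, p.IsHomLift (wordHom w) β := by
  induction π with
  | nil s => exact ⟨𝟙 _, IsHomLift.id s.2⟩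
  | cons t s u a x hstep π ih =>
    obtain ⟨β₁, hβ₁⟩ := hstep
    obtain ⟨β₂, hβ₂⟩ := ih
    exact ⟨β₁ ≫ β₂, inferInstanceAs (p.IsHomLift (letterHom a ≫ wordHom x) (β₁ ≫ β₂))⟩

variable {p}

theorem IsULF.exists_path_of_isHomLift (hp : IsULF p) (w : List σ) :
    ∀ s (γ : s.1 ⟶ qf), p.IsHomLift (wordHom w ≫ eowHom) γ →
      ∃ t ∈ (p.toNFA q₀ qf).accept, Nonempty ((p.toNFA q₀ qf).Path s t w) := by
  induction w with
  | nil =>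
    intro s γ hγ
    exact ⟨s, ⟨γ, by simpa [wordHom_nil] using hγ⟩, ⟨.nil s⟩⟩
  | cons a w ih =>
    intro s γ hγ
    have : p.IsHomLift (letterHom a ≫ wordHom w ≫ eowHom) γ := by simpa [wordHom_cons] using hγ
    obtain ⟨Z, β, γ', -, hβ, hγ'⟩ := hp.exists_isHomLift_factor γ (letterHom a) (wordHom w ≫ eowHom)
    obtain ⟨t, ht, ⟨π⟩⟩ := ih ⟨Z, IsHomLift.codomain_eq p (letterHom a) β⟩ γ' hγ'
    exact ⟨t, ht, ⟨.cons _ s t a w ⟨β, hβ⟩ π⟩⟩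

theorem IsULF.mem_toNFA_accepts_iff (hp : IsULF p) (w : List σ) :
    w ∈ (p.toNFA q₀ qf).accepts ↔ ∃ α : q₀ ⟶ qf, p.IsHomLift (bracket w) α := by
  rw [NFA.accepts_iff_exists_path, bracket_eq]
  constructor
  · rintro ⟨s, ⟨β₀, hβ₀⟩, t, ⟨γ, hγ⟩, ⟨π⟩⟩
    obtain ⟨β, hβ⟩ := p.exists_isHomLift_of_path q₀ qf π
    exact ⟨β₀ ≫ β ≫ γ, inferInstance⟩
  · rintro ⟨α, hα⟩
    obtain ⟨Z, β₀, γ, -, hβ₀, hγ⟩ := hp.exists_isHomLift_factor α bowHom (wordHom w ≫ eowHom)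
    obtain ⟨t, ht, hπ⟩ := hp.exists_path_of_isHomLift q₀ qf w
      ⟨Z, IsHomLift.codomain_eq p bowHom β₀⟩ γ hγ
    exact ⟨_, ⟨β₀, hβ₀⟩, t, ht, hπ⟩

theorem isRegular_of_isULF_of_finite {L : Language σ} (hp : IsULF p)
    (hstar : {X : Q | p.obj X = (Paths.of (BV σ)).obj BV.star}.Finite)
    (hL : ∀ w, w ∈ L ↔ ∃ α : q₀ ⟶ qf, p.IsHomLift (bracket w) α) : L.IsRegular := by
  have : Finite {X : Q // p.obj X = (Paths.of (BV σ)).obj BV.star} := hstar.to_subtype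
  have hacc : (p.toNFA q₀ qf).accepts = L :=
    Set.ext fun w => (hp.mem_toNFA_accepts_iff q₀ qf w).trans (hL w).symm
  exact hacc ▸ (p.toNFA q₀ qf).isRegular_accepts

end Recognizer

namespace DFA

variable {σ S : Type} (M : DFA σ S)

inductive BracketVertex (M : DFA σ S) : Type where
  | bot
  | state (s : S)
  | top

inductive BracketEdge : M.BracketVertex → M.BracketVertex → Type where
  | bow : BracketEdge .bot (.state M.start)
  | letter (s : S) (a : σ) : BracketEdge (.state s) (.state (M.step s a))
  | eow (s : S) (h : s ∈ M.accept) : BracketEdge (.state s) .top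

instance : Quiver M.BracketVertex := ⟨M.BracketEdge⟩

def bracketLabel : M.BracketVertex ⥤q BV σ where
  obj
    | .bot => .bot
    | .state _ => .star
    | .top => .top
  map
    | .bow => BE.bow
    | .letter _ a => BE.letter a
    | .eow _ _ => BE.eow

def BracketVertex.encode : M.BracketVertex → Option (Option S)
  | .bot => none
  | .state s => some (some s)
  | .top => some none

instance [Finite S] : Finite M.BracketVertex :=
  Finite.of_injective (BracketVertex.encode M) fun x y h => by
    cases x <;> cases y <;> simp_all [BracketVertex.encode]

def BracketEdge.encode : (Σ x y : M.BracketVertex, x ⟶ y) → Option (S ⊕ S × σ)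
  | ⟨_, _, .bow⟩ => none
  | ⟨_, _, .letter s a⟩ => some (.inr (s, a))
  | ⟨_, _, .eow s _⟩ => some (.inl s)

instance [Finite S] [Finite σ] : Finite (Σ x y : M.BracketVertex, x ⟶ y) :=
  Finite.of_injective (BracketEdge.encode M) <| by
    rintro ⟨_, _, _ | ⟨s, a⟩ | ⟨s, hs⟩⟩ ⟨_, _, _ | ⟨s', a'⟩ | ⟨s', hs'⟩⟩ h <;>
      simp_all [BracketEdge.encode] <;> aesop

def liftWord (s : S) : ∀ w : List σ, Path (BracketVertex.state (M := M) s) (.state (M.evalFrom s w))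
  | [] => .nil
  | a :: w => (Path.nil.cons (BracketEdge.letter s a)).comp (liftWord (M.step s a) w)

theorem mapPath_liftWord (s : S) (w : List σ) :
    M.bracketLabel.mapPath (M.liftWord s w) = wordPath w := by
  induction w generalizing s with
  | nil => rfl
  | cons a w ih =>
    exact (M.bracketLabel.mapPath_comp _ (M.liftWord (M.step s a) w)).trans
      (congrArg (Path.comp _) (ih (M.step s a)))

/-- What a path out of `⊥` spells, stated for every endpoint so that it is an induction motive. -/
def IsRunLabel : ∀ {y : M.BracketVertex}, Path .bot y → Prop
  | .bot, α => α = .nil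
  | .state s, α => ∃ w : List σ, M.evalFrom M.start w = s ∧
      M.bracketLabel.mapPath α = (Path.nil.cons BE.bow).comp (wordPath w)
  | .top, α => ∃ w ∈ M.accepts, M.bracketLabel.mapPath α = bracket w

theorem isRunLabel {y : M.BracketVertex} (α : Path .bot y) : M.IsRunLabel α := by
  induction α with
  | nil => rfl
  | cons α e ih =>
    change M.BracketEdge _ _ at e
    cases e with
    | bow =>
      cases (ih : α = .nil)
      exact ⟨[], rfl, rfl⟩
    | letter s a =>
      obtain ⟨w, rfl, hα⟩ := ih
      refine ⟨w ++ [a], M.evalFrom_append_singleton _ _ _, ?_⟩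
      rw [Prefunctor.mapPath_cons, hα, wordPath_concat]
      rfl
    | eow s hs =>
      obtain ⟨w, rfl, hα⟩ := ih
      exact ⟨w, hs, by rw [Prefunctor.mapPath_cons, hα]; rfl⟩

theorem exists_mapPath_bracketLabel_eq_iff
    (m : (Paths.of (BV σ)).obj BV.bot ⟶ (Paths.of (BV σ)).obj BV.top) :
    (∃ α : Path (.bot : M.BracketVertex) .top, M.bracketLabel.mapPath α = m) ↔
      ∃ w ∈ M.accepts, m = bracket w := by
  constructor
  · rintro ⟨α, rfl⟩
    obtain ⟨w, hw, hα⟩ := M.isRunLabel α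
    exact ⟨w, hw, hα⟩
  · rintro ⟨w, hw, rfl⟩
    refine ⟨((Path.nil.cons BracketEdge.bow).comp (M.liftWord M.start w)).cons
      (BracketEdge.eow _ hw), ?_⟩
    rw [Prefunctor.mapPath_cons, Prefunctor.mapPath_comp, mapPath_liftWord]
    rfl

end DFA

attribute [local instance] uliftCategory in
theorem exists_isULF_isFinitary_of_isRegular {σ : Type} [Finite σ] {L : Language σ}
    (hL : L.IsRegular) :
    ∃ (Q : Type u') (_ : Category.{v'} Q) (p : Q ⥤ Paths (BV σ)) (q₀ qf : Q)
      (h₀ : p.obj q₀ = (Paths.of (BV σ)).obj BV.bot) (hf : p.obj qf = (Paths.of (BV σ)).obj BV.top),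
      IsULF p ∧ IsFinitary p ∧
      { m : (Paths.of (BV σ)).obj (BV.bot : BV σ) ⟶ (Paths.of (BV σ)).obj BV.top |
          ∃ α : q₀ ⟶ qf, p.map α = eqToHom h₀ ≫ m ≫ eqToHom hf.symm } =
        { m | ∃ w ∈ L, m = bracket w } := by
  obtain ⟨S, _, M, rfl⟩ := hL
  refine ⟨ULiftHom.{v'} (ULift.{u'} (Paths M.BracketVertex)), inferInstance,
    ULiftHom.down ⋙ ULift.downFunctor ⋙ Cat.freeMap M.bracketLabel,
    ULiftHom.objUp (ULift.up .bot), ULiftHom.objUp (ULift.up .top), rfl, rfl,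
    (isULF_freeMap _).uliftDown_comp, (isFinitary_freeMap _).uliftDown_comp, ?_⟩
  ext m
  change (∃ α : ULift (Path (.bot : M.BracketVertex) .top),
    (M.bracketLabel.mapPath α.down : (Paths.of (BV σ)).obj .bot ⟶ _) = 𝟙 _ ≫ m ≫ 𝟙 _) ↔ _
  simp only [Category.id_comp, Category.comp_id, ← M.exists_mapPath_bracketLabel_eq_iff]
  exact ⟨fun ⟨α, hα⟩ => ⟨α.down, hα⟩, fun ⟨α, hα⟩ => ⟨ULift.up α, hα⟩⟩

/-- A language `L ⊆ List σ` over a finite alphabet is regular in the classical sense iff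
`⌊L⌉ = { ⌊w⌉ | w ∈ L }` is the language of arrows recognized by a nondeterministic
finite-state automaton (a finitary ULF functor with chosen states) over `Paths (BV σ)`. -/
theorem language_isRegular_iff_nfa {σ : Type} [Finite σ] (L : Language σ) :
    L.IsRegular ↔
      ∃ (Q : Type u') (_ : Category.{v'} Q) (p : Q ⥤ Paths (BV σ)) (q₀ qf : Q)
        (h₀ : p.obj q₀ = (Paths.of (BV σ)).obj BV.bot) (hf : p.obj qf = (Paths.of (BV σ)).obj BV.top),
        IsULF p ∧ IsFinitary p ∧
        { m : (Paths.of (BV σ)).obj (BV.bot : BV σ) ⟶ (Paths.of (BV σ)).obj BV.top |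
            ∃ α : q₀ ⟶ qf, p.map α = eqToHom h₀ ≫ m ≫ eqToHom hf.symm } =
          { m | ∃ w ∈ L, m = bracket w } := by
  refine ⟨exists_isULF_isFinitary_of_isRegular, ?_⟩
  rintro ⟨Q, _, p, q₀, qf, h₀, hf, hp, hfin, hset⟩
  refine isRegular_of_isULF_of_finite q₀ qf hp (hfin.1 _) fun w => ?_
  have hw : w ∈ L ↔ bracket w ∈ { m | ∃ w ∈ L, m = bracket w } :=
    ⟨fun hw => ⟨w, hw, rfl⟩, fun ⟨w', hw', h⟩ => bracket_injective h ▸ hw'⟩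
  simp only [hw, ← hset, Set.mem_ofPred_eq, p.isHomLift_iff_map_eq h₀ hf]
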